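/- arXiv:1812.05566 — 2 statements merged into one kernel-verified Lean document; each statement's English description precedes it below -/
import Mathlib

section
/- Converse bound for universal LDCs: for every integer K ≥ 1, N ≥ 1 and every universal locally decodable code (ULDC) with locality N, K source symbols of entropy L_w each, and M coded symbols of entropy L_x each, one has (1 + N + N² + ⋯ + N^{K−1})·L_w ≤ N^K·L_x; equivalently, the symbol rate satisfies R_s = L_w/L_x ≤ C*(N,K) = N·(1 + 1/N + 1/N² + ⋯ + 1/N^{K−1})^{−1}. -/
/-!
Write `W_S` for the source symbols indexed by `S`. By induction on `S`, every coded symbol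
satisfies `H(X_m | W_S) ≤ N^|S| L_x - (1 + N + ⋯ + N^(|S|-1)) L_w`. To add a symbol `W_k`,
universality gives a decoding set `s ∋ m` of `W_k`, and then
`H(X_m | W_S, W_k) ≤ H(X_s | W_S, W_k) ≤ H(X_s | W_S) - L_w ≤ ∑_{m'∈s} H(X_m' | W_S) - L_w`
because `W_k` is independent of `W_S` and is a function of `X_s`. For `S` = all source
symbols the left-hand side is nonnegative.

Entropies are handled as expectations of the surprisal `-log₂ P(X = X ω)`, which makes the
data-processing inequality pointwise and reduces submodularity to Gibbs' inequality.
-/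

open scoped BigOperators

noncomputable section

/-- A finite probability space: a finite type together with a probability mass function. -/
structure FinProbSpace where
  Ω : Type
  [fin : Fintype Ω]
  p : Ω → ℝ
  nonneg : ∀ ω, 0 ≤ p ω
  sum_one : ∑ ω, p ω = 1

attribute [instance] FinProbSpace.fin

namespace FinProbSpace

variable (P : FinProbSpace)

/-- Probability that the random variable `X` takes the value `a`. -/
def prob {α : Type} [DecidableEq α] (X : P.Ω → α) (a : α) : ℝ :=
  ∑ ω, if X ω = a then P.p ω else 0

/-- Shannon entropy (in bits) of a finitely valued random variable. -/
def H {α : Type} [Fintype α] [DecidableEq α] (X : P.Ω → α) : ℝ :=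
  ∑ a, -(P.prob X a * Real.logb 2 (P.prob X a))

/-- Conditional Shannon entropy `H(X | Y) = H(X, Y) - H(Y)` (in bits). -/
def condH {α β : Type} [Fintype α] [DecidableEq α] [Fintype β] [DecidableEq β]
    (X : P.Ω → α) (Y : P.Ω → β) : ℝ :=
  P.H (fun ω => (X ω, Y ω)) - P.H Y

/-- The tuple random variable `(X_i)_{i ∈ ι}`. -/
def tuple {ι V : Type} (X : ι → P.Ω → V) : P.Ω → ι → V := fun ω i => X i ω

/-- Joint (mutual) independence of a finite family of random variables. -/
def iIndep {ι V : Type} [Fintype ι] [DecidableEq ι] [DecidableEq V] (X : ι → P.Ω → V) : Prop :=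
  ∀ a : ι → V, P.prob (P.tuple X) a = ∏ i, P.prob (X i) (a i)

/-- `X` and `Y` contain the same information about everything beyond `Z`:
`H(X | Y, Z) = H(Y | X, Z) = 0`. -/
def sameInfo {α β γ : Type} [Fintype α] [DecidableEq α] [Fintype β] [DecidableEq β]
    [Fintype γ] [DecidableEq γ] (X : P.Ω → α) (Y : P.Ω → β) (Z : P.Ω → γ) : Prop :=
  P.condH X (fun ω => (Y ω, Z ω)) = 0 ∧ P.condH Y (fun ω => (X ω, Z ω)) = 0

end FinProbSpace

/-- A locally decodable code with `K` source symbols of entropy `Lw`, `M` coded symbols of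
entropy `Lx`, and locality `N`. -/
structure LDC (K N M : ℕ) (Lw Lx : ℝ) where
  P : FinProbSpace
  V : Type
  [fV : Fintype V]
  [dV : DecidableEq V]
  V' : Type
  [fV' : Fintype V']
  [dV' : DecidableEq V']
  /-- the source symbols -/
  W : Fin K → P.Ω → V
  /-- the coded symbols -/
  X : Fin M → P.Ω → V'
  indep : P.iIndep W
  HW : ∀ k, P.H (W k) = Lw
  coded_fn : ∀ m, ∃ f : (Fin K → V) → V', ∀ ω, X m ω = f (fun k => W k ω)
  HX : ∀ m, P.H (X m) = Lx
  /-- the decoding supersets -/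
  decSets : Fin K → Finset (Finset (Fin M))
  decSets_nonempty : ∀ k, (decSets k).Nonempty
  decSets_card : ∀ k, ∀ s ∈ decSets k, s.card = N
  decodes : ∀ k, ∀ s ∈ decSets k,
    P.condH (W k) (P.tuple fun i : {x // x ∈ s} => X i.1) = 0

attribute [instance] LDC.fV LDC.dV LDC.fV' LDC.dV'

/-- A universal LDC: every coded symbol appears in some decoding set of every source symbol. -/
def LDC.IsUniversal {K N M : ℕ} {Lw Lx : ℝ} (C : LDC K N M Lw Lx) : Prop :=
  ∀ (m : Fin M) (k : Fin K), ∃ s ∈ C.decSets k, m ∈ s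

/-- A perfectly smooth LDC: for each source symbol, every coded symbol lies in the same
number of decoding sets. -/
def LDC.IsSmooth {K N M : ℕ} {Lw Lx : ℝ} (C : LDC K N M Lw Lx) : Prop :=
  ∀ (k : Fin K) (m m' : Fin M),
    ((C.decSets k).filter (fun s => m ∈ s)).card =
      ((C.decSets k).filter (fun s => m' ∈ s)).card

/-- `C*(N, K) = N (1 + 1/N + ⋯ + 1/N^{K-1})⁻¹`. -/
def Cstar (N K : ℕ) : ℝ := N / (∑ j ∈ Finset.range K, (1 / (N : ℝ)) ^ j)

/-- An `N`-query information retrieval scheme with `K` messages of entropy `Lw` and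
answer sets of sizes `Mn n` with answers of entropy `Lx`. -/
structure IRScheme (K N : ℕ) (Mn : Fin N → ℕ) (Lw Lx : ℝ) where
  P : FinProbSpace
  V : Type
  [fV : Fintype V]
  [dV : DecidableEq V]
  V' : Type
  [fV' : Fintype V']
  [dV' : DecidableEq V']
  /-- the messages -/
  W : Fin K → P.Ω → V
  /-- `A n m` is the `m`-th possible answer of database `n` -/
  A : (n : Fin N) → Fin (Mn n) → P.Ω → V'
  indep : P.iIndep W
  HW : ∀ k, P.H (W k) = Lw
  ans_fn : ∀ n m, ∃ f : (Fin K → V) → V', ∀ ω, A n m ω = f (fun k => W k ω)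
  HA : ∀ n m, P.H (A n m) = Lx
  /-- the decoding supersets: each decoding set consists of one answer index per database -/
  Q : Fin K → Finset ((n : Fin N) → Fin (Mn n))
  Q_nonempty : ∀ k, (Q k).Nonempty
  decodes : ∀ k, ∀ q ∈ Q k, P.condH (W k) (P.tuple fun n => A n (q n)) = 0

attribute [instance] IRScheme.fV IRScheme.dV IRScheme.fV' IRScheme.dV'

/-- A repudiative (RIR_max) scheme: every possible answer of every database appears in some
decoding set of every message. -/
def IRScheme.IsRIR {K N : ℕ} {Mn : Fin N → ℕ} {Lw Lx : ℝ} (C : IRScheme K N Mn Lw Lx) : Prop :=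
  ∀ (n : Fin N) (m : Fin (Mn n)) (k : Fin K), ∃ q ∈ C.Q k, q n = m

/-- A perfectly private (PIR_max) scheme: for each message there is a distribution on its
decoding sets such that the marginal distribution of the query to each database does not
depend on the message. -/
def IRScheme.IsPIR {K N : ℕ} {Mn : Fin N → ℕ} {Lw Lx : ℝ} (C : IRScheme K N Mn Lw Lx) : Prop :=
  ∃ μ : Fin K → ((n : Fin N) → Fin (Mn n)) → ℝ,
    (∀ k q, 0 ≤ μ k q) ∧ (∀ k, ∑ q ∈ C.Q k, μ k q = 1) ∧
    (∀ (k k' : Fin K) (n : Fin N) (m : Fin (Mn n)),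
      ∑ q ∈ (C.Q k).filter (fun q => q n = m), μ k q =
        ∑ q ∈ (C.Q k').filter (fun q => q n = m), μ k' q)

/-- `C_K(N) = (1 + 1/N + ⋯ + 1/N^{K-1})⁻¹`, the capacity of PIR. -/
def CK (N K : ℕ) : ℝ := (∑ j ∈ Finset.range K, (1 / (N : ℝ)) ^ j)⁻¹

open Finset Function

lemma mul_neg_logb_le_of_le {p x y : ℝ} (hp : 0 ≤ p) (hpx : p ≤ x) (hxy : x ≤ y) :
    p * -Real.logb 2 y ≤ p * -Real.logb 2 x := by
  rcases hp.eq_or_lt with rfl | hp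
  · simp
  exact mul_le_mul_of_nonneg_left
    (neg_le_neg (Real.logb_le_logb_of_le one_lt_two (hp.trans_le hpx) hxy)) hp.le

namespace FinProbSpace

variable (P : FinProbSpace) {α β γ δ : Type}

section Prob

variable [DecidableEq α]

lemma prob_nonneg (X : P.Ω → α) (a : α) : 0 ≤ P.prob X a :=
  sum_nonneg fun ω _ => by split_ifs <;> simp [P.nonneg ω]

lemma p_le_prob_apply (X : P.Ω → α) (ω : P.Ω) : P.p ω ≤ P.prob X (X ω) := by
  simpa [prob] using single_le_sum (f := fun ω' => if X ω' = X ω then P.p ω' else 0)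
    (fun ω' _ => by split_ifs <;> simp [P.nonneg ω']) (mem_univ ω)

lemma prob_apply_le_of_factorsThrough [DecidableEq β] {X : P.Ω → α} {Y : P.Ω → β}
    (h : FactorsThrough Y X) (ω : P.Ω) : P.prob X (X ω) ≤ P.prob Y (Y ω) :=
  sum_le_sum fun ω' _ => by
    by_cases hX : X ω' = X ω
    · simp [hX, h hX]
    · rw [if_neg hX]; split_ifs <;> simp [P.nonneg ω']

variable [Fintype α]

lemma sum_prob_mul (X : P.Ω → α) (φ : α → ℝ) :
    ∑ a, P.prob X a * φ a = ∑ ω, P.p ω * φ (X ω) := by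
  simp only [prob, sum_mul, ite_mul, zero_mul]
  rw [sum_comm]
  simp

lemma sum_prob (X : P.Ω → α) : ∑ a, P.prob X a = 1 := by
  simpa [P.sum_one] using P.sum_prob_mul X 1

lemma prob_comp [DecidableEq β] (f : α → β) (X : P.Ω → α) (b : β) :
    P.prob (fun ω => f (X ω)) b = ∑ a, if f a = b then P.prob X a else 0 := by
  simpa [mul_ite, prob] using (P.sum_prob_mul X fun a => if f a = b then 1 else 0).symm

lemma sum_prob_pair_left [DecidableEq γ] (U : P.Ω → α) (A : P.Ω → γ) (c : γ) :
    ∑ u, P.prob (fun ω => (U ω, A ω)) (u, c) = P.prob A c := by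
  simp only [prob, Prod.mk.injEq]
  rw [sum_comm]
  refine sum_congr rfl fun ω _ => ?_
  by_cases hc : A ω = c <;> simp [hc]

end Prob

section Entropy

variable [Fintype α] [DecidableEq α] [Fintype β] [DecidableEq β] [Fintype γ] [DecidableEq γ]

lemma H_eq_sum_mul_neg_logb (X : P.Ω → α) :
    P.H X = ∑ ω, P.p ω * -Real.logb 2 (P.prob X (X ω)) := by
  rw [H, ← P.sum_prob_mul X fun a => -Real.logb 2 (P.prob X a)]
  simp only [mul_neg]

lemma H_le_of_factorsThrough {X : P.Ω → α} {Y : P.Ω → β} (h : FactorsThrough Y X) :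
    P.H Y ≤ P.H X := by
  simp only [H_eq_sum_mul_neg_logb]
  exact sum_le_sum fun ω _ => mul_neg_logb_le_of_le (P.nonneg ω) (P.p_le_prob_apply X ω)
    (P.prob_apply_le_of_factorsThrough h ω)

lemma H_eq_of_factorsThrough {X : P.Ω → α} {Y : P.Ω → β} (hYX : FactorsThrough Y X)
    (hXY : FactorsThrough X Y) : P.H Y = P.H X :=
  (P.H_le_of_factorsThrough hYX).antisymm (P.H_le_of_factorsThrough hXY)

lemma H_const (a : α) : P.H (fun _ => a) = 0 := by
  simp [H_eq_sum_mul_neg_logb, prob, P.sum_one]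

/-- Gibbs' inequality against a subprobability `q`. -/
lemma H_le_sum_mul_neg_logb (X : P.Ω → α) (q : α → ℝ) (hq : ∀ a, 0 ≤ q a)
    (hq_sum : ∑ a, q a ≤ 1) (hq_pos : ∀ ω, 0 < P.p ω → 0 < q (X ω)) :
    P.H X ≤ ∑ ω, P.p ω * -Real.logb 2 (q (X ω)) := by
  have hlog2 : 0 < Real.log 2 := Real.log_pos one_lt_two
  have hterm : ∀ ω, P.p ω * Real.logb 2 (q (X ω)) - P.p ω * Real.logb 2 (P.prob X (X ω)) ≤
      P.p ω * (q (X ω) / P.prob X (X ω) - 1) / Real.log 2 := by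
    intro ω
    rcases (P.nonneg ω).eq_or_lt with h0 | h0
    · simp [← h0]
    have hr := h0.trans_le (P.p_le_prob_apply X ω)
    rw [← mul_sub, ← Real.logb_div (hq_pos ω h0).ne' hr.ne', Real.logb, mul_div_assoc]
    exact mul_le_mul_of_nonneg_left (div_le_div_of_nonneg_right
      (Real.log_le_sub_one_of_pos (div_pos (hq_pos ω h0) hr)) hlog2.le) h0.le
  have hmass : ∑ ω, P.p ω * (q (X ω) / P.prob X (X ω) - 1) ≤ 0 := by
    rw [← P.sum_prob_mul X fun a => q a / P.prob X a - 1]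
    calc ∑ a, P.prob X a * (q a / P.prob X a - 1)
        ≤ ∑ a, (q a - P.prob X a) := sum_le_sum fun a _ => ?_
      _ ≤ 0 := by rw [sum_sub_distrib, P.sum_prob]; linarith
    rcases (P.prob_nonneg X a).eq_or_lt with h | h
    · simp [← h, hq a]
    · rw [mul_sub, mul_div_cancel₀ _ h.ne', mul_one]
  have hsum := sum_le_sum fun ω (_ : ω ∈ univ) => hterm ω
  rw [sum_sub_distrib, ← sum_div] at hsum
  have := div_nonpos_of_nonpos_of_nonneg hmass hlog2.le
  rw [H_eq_sum_mul_neg_logb]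
  simp only [mul_neg, sum_neg_distrib]
  linarith

/-- Gibbs' inequality against `q(u, v, c) = P(u, c) P(v, c) / P(c)`. -/
lemma H_triple_add_H_le (U : P.Ω → α) (V : P.Ω → β) (A : P.Ω → γ) :
    P.H (fun ω => (U ω, V ω, A ω)) + P.H A ≤
      P.H (fun ω => (U ω, A ω)) + P.H (fun ω => (V ω, A ω)) := by
  set pUA := P.prob (fun ω => (U ω, A ω))
  set pVA := P.prob (fun ω => (V ω, A ω))
  set pA := P.prob A
  let q : α × β × γ → ℝ := fun x => pUA (x.1, x.2.2) * pVA (x.2.1, x.2.2) / pA x.2.2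
  have hq_sum : ∑ x, q x = 1 := by
    calc ∑ x, q x = ∑ c, (∑ u, pUA (u, c)) * (∑ v, pVA (v, c)) / pA c := by
          simp only [q, Fintype.sum_prod_type, sum_mul_sum, sum_div]
          exact (sum_congr rfl fun _ _ => sum_comm).trans sum_comm
      _ = ∑ c, pA c := by simp only [pUA, pVA, pA, P.sum_prob_pair_left, mul_self_div_self]
      _ = 1 := P.sum_prob A
  have hpos : ∀ ω, 0 < P.p ω →
      0 < pUA (U ω, A ω) ∧ 0 < pVA (V ω, A ω) ∧ 0 < pA (A ω) :=
    fun ω h => ⟨h.trans_le (P.p_le_prob_apply (fun ω => (U ω, A ω)) ω),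
      h.trans_le (P.p_le_prob_apply (fun ω => (V ω, A ω)) ω),
      h.trans_le (P.p_le_prob_apply A ω)⟩
  have hgibbs := P.H_le_sum_mul_neg_logb (fun ω => (U ω, V ω, A ω)) q
    (fun _ => div_nonneg (mul_nonneg (P.prob_nonneg _ _) (P.prob_nonneg _ _))
      (P.prob_nonneg _ _))
    hq_sum.le (fun ω h => by obtain ⟨h1, h2, h3⟩ := hpos ω h; positivity)
  have hcross : ∑ ω, P.p ω * -Real.logb 2 (q (U ω, V ω, A ω)) =
      P.H (fun ω => (U ω, A ω)) + P.H (fun ω => (V ω, A ω)) - P.H A := by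
    simp only [H_eq_sum_mul_neg_logb, ← sum_add_distrib, ← sum_sub_distrib]
    refine sum_congr rfl fun ω _ => ?_
    rcases (P.nonneg ω).eq_or_lt with h0 | h0
    · simp [← h0]
    obtain ⟨h1, h2, h3⟩ := hpos ω h0
    rw [Real.logb_div (mul_pos h1 h2).ne' h3.ne', Real.logb_mul h1.ne' h2.ne']
    ring
  linarith

lemma condH_nonneg (X : P.Ω → α) (Y : P.Ω → β) : 0 ≤ P.condH X Y :=
  sub_nonneg.2 (P.H_le_of_factorsThrough fun _ _ h => congrArg Prod.snd h)

lemma condH_le_of_factorsThrough_left {X : P.Ω → α} {Y : P.Ω → β} (h : FactorsThrough X Y)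
    (A : P.Ω → γ) : P.condH X A ≤ P.condH Y A :=
  sub_le_sub_right (P.H_le_of_factorsThrough (X := fun ω => (Y ω, A ω))
    (Y := fun ω => (X ω, A ω)) fun _ _ hω => by
      simp only [Prod.mk.injEq] at hω ⊢
      exact ⟨h hω.1, hω.2⟩) _

lemma condH_le_of_factorsThrough_right (X : P.Ω → α) {A : P.Ω → β} {B : P.Ω → γ}
    (h : FactorsThrough A B) : P.condH X B ≤ P.condH X A := by
  have hXBA : P.H (fun ω => (X ω, B ω, A ω)) = P.H (fun ω => (X ω, B ω)) :=
    P.H_eq_of_factorsThrough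
      (fun _ _ hω => by
        simp only [Prod.mk.injEq] at hω ⊢
        exact ⟨hω.1, hω.2, h hω.2⟩)
      fun _ _ hω => by simp_all
  have hBA : P.H (fun ω => (B ω, A ω)) = P.H B :=
    P.H_eq_of_factorsThrough (fun _ _ hω => Prod.ext hω (h hω))
      fun _ _ hω => congrArg Prod.fst hω
  have := P.H_triple_add_H_le X B A
  unfold condH
  linarith

lemma condH_pair_le (U : P.Ω → α) (V : P.Ω → β) (A : P.Ω → γ) :
    P.condH (fun ω => (U ω, V ω)) A ≤ P.condH U A + P.condH V A := by
  have hassoc : P.H (fun ω => ((U ω, V ω), A ω)) = P.H (fun ω => (U ω, V ω, A ω)) :=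
    P.H_eq_of_factorsThrough (fun _ _ hω => by simp_all) fun _ _ hω => by simp_all
  have := P.H_triple_add_H_le U V A
  unfold condH
  linarith

end Entropy

section Subfamily

variable {ι : Type} [DecidableEq ι]

def subfamily (Z : ι → P.Ω → α) (t : Finset ι) : P.Ω → ι → Option α :=
  fun ω i => if i ∈ t then some (Z i ω) else none

lemma subfamily_insert_factorsThrough (Z : ι → P.Ω → α) (a : ι) (t : Finset ι) :
    FactorsThrough (P.subfamily Z (insert a t)) fun ω => (Z a ω, P.subfamily Z t ω) :=
  fun ω ω' hω => by
    obtain ⟨hZa, ht⟩ := Prod.ext_iff.1 hω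
    funext i
    by_cases hi : i = a
    · simp_all [subfamily]
    · simpa [subfamily, hi] using congrFun ht i

variable [Fintype ι] [DecidableEq α]

lemma iIndep.comp [Fintype β] [DecidableEq β] {X : ι → P.Ω → β} (hX : P.iIndep X)
    (g : ι → β → α) : P.iIndep fun i ω => g i (X i ω) := by
  intro b
  calc P.prob (P.tuple fun i ω => g i (X i ω)) b
      = ∑ a : ι → β, if (fun i => g i (a i)) = b then P.prob (P.tuple X) a else 0 :=
        P.prob_comp (fun (a : ι → β) (i : ι) => g i (a i)) (P.tuple X) b
    _ = ∑ a : ι → β, ∏ i, if g i (a i) = b i then P.prob (X i) (a i) else 0 :=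
        sum_congr rfl fun a _ => by simp only [hX a, Fintype.prod_ite_zero, funext_iff]
    _ = ∏ i, ∑ x, if g i x = b i then P.prob (X i) x else 0 :=
        (Fintype.prod_sum fun i x => if g i x = b i then P.prob (X i) x else 0).symm
    _ = ∏ i, P.prob (fun ω => g i (X i ω)) (b i) := by simp only [P.prob_comp]

variable [Fintype α] [Fintype γ] [DecidableEq γ]

lemma condH_subfamily_le_sum (Z : ι → P.Ω → α) (A : P.Ω → γ) (t : Finset ι) :
    P.condH (P.subfamily Z t) A ≤ ∑ i ∈ t, P.condH (Z i) A := by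
  induction t using Finset.induction_on with
  | empty =>
    simpa [condH] using P.H_le_of_factorsThrough (X := A)
      (Y := fun ω => (P.subfamily Z ∅ ω, A ω)) fun _ _ hω =>
        Prod.ext (funext fun i => by simp [subfamily]) hω
  | insert a t ha ih =>
    rw [sum_insert ha]
    linarith [P.condH_le_of_factorsThrough_left (P.subfamily_insert_factorsThrough Z a t) A,
      P.condH_pair_le (Z a) (P.subfamily Z t) A]

lemma condH_tuple_le_sum (Z : ι → P.Ω → α) (A : P.Ω → γ) :
    P.condH (P.tuple Z) A ≤ ∑ i, P.condH (Z i) A :=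
  (P.condH_le_of_factorsThrough_left (Y := P.subfamily Z univ)
    (fun _ _ hω => funext fun i => by simpa [subfamily, tuple] using congrFun hω i) A).trans
    (P.condH_subfamily_le_sum Z A univ)

lemma H_tuple_of_iIndep {X : ι → P.Ω → α} (hX : P.iIndep X) :
    P.H (P.tuple X) = ∑ i, P.H (X i) := by
  simp only [H_eq_sum_mul_neg_logb]
  rw [sum_comm]
  refine sum_congr rfl fun ω _ => ?_
  rcases (P.nonneg ω).eq_or_lt with h0 | h0
  · simp [← h0]
  rw [hX]
  dsimp only [tuple]
  rw [Real.logb_prod _ _ fun i _ => (h0.trans_le (P.p_le_prob_apply (X i) ω)).ne',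
    ← sum_neg_distrib, mul_sum]

lemma H_subfamily_of_iIndep {X : ι → P.Ω → α} (hX : P.iIndep X) (t : Finset ι) :
    P.H (P.subfamily X t) = ∑ i ∈ t, P.H (X i) := by
  rw [← Fintype.sum_ite_mem]
  refine (P.H_tuple_of_iIndep (iIndep.comp P hX fun i x => if i ∈ t then some x else none)).trans
    (sum_congr rfl fun i _ => ?_)
  split_ifs with hi
  · exact P.H_eq_of_factorsThrough (fun _ _ h => congrArg some h)
      fun _ _ h => Option.some_injective _ h
  · exact P.H_const none

end Subfamily

lemma condH_le_condH_sub_H_of_decodable [Fintype α] [DecidableEq α] [Fintype β] [DecidableEq β]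
    [Fintype γ] [DecidableEq γ] [Fintype δ] [DecidableEq δ]
    {Y : P.Ω → α} {A : P.Ω → β} {A' : P.Ω → γ} {W : P.Ω → δ}
    (hA' : FactorsThrough A' fun ω => (W ω, A ω)) (hH : P.H A' = P.H A + P.H W)
    (hW : P.condH W Y = 0) : P.condH Y A' ≤ P.condH Y A - P.H W := by
  have hYA' : P.H (fun ω => (Y ω, A' ω)) ≤ P.H (fun ω => (W ω, Y ω, A ω)) :=
    P.H_le_of_factorsThrough fun ω ω' hω => by
      simp only [Prod.mk.injEq] at hω ⊢
      exact ⟨hω.2.1, hA' (Prod.ext_iff.2 ⟨hω.1, hω.2.2⟩)⟩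
  have hWYA : P.condH W (fun ω => (Y ω, A ω)) ≤ P.condH W Y :=
    P.condH_le_of_factorsThrough_right W fun _ _ hω => congrArg Prod.fst hω
  unfold condH at *
  linarith

end FinProbSpace

namespace LDC

variable {K N M : ℕ} {Lw Lx : ℝ} (C : LDC K N M Lw Lx)

lemma H_subfamily_W (S : Finset (Fin K)) : C.P.H (C.P.subfamily C.W S) = #S * Lw := by
  simp [C.P.H_subfamily_of_iIndep C.indep, C.HW]

theorem condH_X_subfamily_W_le (hU : C.IsUniversal) (S : Finset (Fin K)) (m : Fin M) :
    C.P.condH (C.X m) (C.P.subfamily C.W S) ≤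
      (N : ℝ) ^ #S * Lx - (∑ i ∈ range #S, (N : ℝ) ^ i) * Lw := by
  induction S using Finset.induction_on generalizing m with
  | empty =>
    have hpad : C.P.H (fun ω => (C.X m ω, C.P.subfamily C.W ∅ ω)) = C.P.H (C.X m) :=
      C.P.H_eq_of_factorsThrough
        (fun _ _ h => Prod.ext h (funext fun i => by simp [FinProbSpace.subfamily]))
        fun _ _ h => congrArg Prod.fst h
    simp [FinProbSpace.condH, hpad, C.H_subfamily_W, C.HX]
  | insert k S hk ih =>
    obtain ⟨s, hs, hms⟩ := hU m k
    set Y := C.P.tuple fun i : {x // x ∈ s} => C.X i.1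
    have hH : C.P.H (C.P.subfamily C.W (insert k S)) =
        C.P.H (C.P.subfamily C.W S) + C.P.H (C.W k) := by
      rw [C.H_subfamily_W, C.H_subfamily_W, card_insert_of_notMem hk, C.HW]
      push_cast
      ring
    calc C.P.condH (C.X m) (C.P.subfamily C.W (insert k S))
        ≤ C.P.condH Y (C.P.subfamily C.W (insert k S)) :=
          C.P.condH_le_of_factorsThrough_left (fun _ _ h => congrFun h ⟨m, hms⟩) _
      _ ≤ C.P.condH Y (C.P.subfamily C.W S) - Lw := by
          simpa [C.HW] using C.P.condH_le_condH_sub_H_of_decodable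
            (C.P.subfamily_insert_factorsThrough C.W k S) hH (C.decodes k s hs)
      _ ≤ ∑ i : {x // x ∈ s}, C.P.condH (C.X i) (C.P.subfamily C.W S) - Lw :=
          sub_le_sub_right (C.P.condH_tuple_le_sum _ _) _
      _ ≤ N * ((N : ℝ) ^ #S * Lx - (∑ j ∈ range #S, (N : ℝ) ^ j) * Lw) - Lw := by
          gcongr
          simpa [C.decSets_card k s hs] using
            sum_le_card_nsmul (univ : Finset s) _ _ fun i _ => ih i
      _ = (N : ℝ) ^ #(insert k S) * Lx - (∑ i ∈ range #(insert k S), (N : ℝ) ^ i) * Lw := by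
          rw [card_insert_of_notMem hk, geom_sum_succ, pow_succ]
          ring

end LDC

lemma pow_mul_geom_sum_inv {R : Type*} [Field R] {x : R} (hx : x ≠ 0) (n : ℕ) :
    x ^ n * ∑ i ∈ range n, x⁻¹ ^ i = x * ∑ i ∈ range n, x ^ i := by
  induction n with
  | zero => simp
  | succ n ih =>
    rw [geom_sum_succ, geom_sum_succ', pow_succ]
    linear_combination ih + x ^ n * (∑ i ∈ range n, x⁻¹ ^ i) * mul_inv_cancel₀ hx

lemma Cstar_eq {N K : ℕ} (hN : N ≠ 0) (hK : K ≠ 0) :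
    Cstar N K = (N : ℝ) ^ K / ∑ j ∈ range K, (N : ℝ) ^ j := by
  have hN' : (N : ℝ) ≠ 0 := Nat.cast_ne_zero.2 hN
  rw [Cstar, div_eq_div_iff (geom_sum_pos (by positivity) hK).ne'
    (geom_sum_pos (by positivity) hK).ne', ← pow_mul_geom_sum_inv hN', one_div]

theorem uldc_converse_general (K N M : ℕ) (hK : 1 ≤ K) (hN : 1 ≤ N) (Lw Lx : ℝ)
    (hLx : 0 < Lx) (C : LDC K N M Lw Lx) (hU : C.IsUniversal) :
    (∑ j ∈ Finset.range K, (N : ℝ) ^ j) * Lw ≤ (N : ℝ) ^ K * Lx ∧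
      Lw / Lx ≤ Cstar N K := by
  obtain ⟨s, hs⟩ := C.decSets_nonempty ⟨0, hK⟩
  obtain ⟨m, -⟩ : s.Nonempty := card_pos.1 (by rw [C.decSets_card _ s hs]; omega)
  have hbound : (∑ j ∈ range K, (N : ℝ) ^ j) * Lw ≤ (N : ℝ) ^ K * Lx := by
    have := C.condH_X_subfamily_W_le hU univ m
    rw [card_univ, Fintype.card_fin] at this
    linarith [C.P.condH_nonneg (C.X m) (C.P.subfamily C.W univ)]
  refine ⟨hbound, ?_⟩
  rw [Cstar_eq (by omega) (by omega),
    div_le_div_iff₀ hLx (geom_sum_pos (by positivity) (by omega))]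
  linarith

/-- Converse bound for universal LDCs: for every ULDC with locality `N`,
`K` source symbols of entropy `Lw` each and `M` coded symbols of entropy `Lx` each,
`(1 + N + ⋯ + N^{K-1}) Lw ≤ N^K Lx`; equivalently `Lw / Lx ≤ C*(N, K)`. -/
theorem uldc_converse (K N M : ℕ) (hK : 1 ≤ K) (hN : 1 ≤ N) (Lw Lx : ℝ)
    (hLw : 0 < Lw) (hLx : 0 < Lx) (C : LDC K N M Lw Lx) (hU : C.IsUniversal) :
    (∑ j ∈ Finset.range K, (N : ℝ) ^ j) * Lw ≤ (N : ℝ) ^ K * Lx ∧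
      Lw / Lx ≤ Cstar N K :=
  uldc_converse_general K N M hK hN Lw Lx hLx C hU
end
end

section
/- Achievability of capacity at length N^K: for all integers N ≥ 2 and K ≥ 1, there exists a perfectly smooth locally decodable code (SLDC) with locality N, K source symbols, exactly M = N^K coded symbols, in which the source symbols are uniformly distributed over L_w = N^K·(N−1) independent bits each, every coded symbol has entropy L_x = N^K − 1 bits, and the symbol rate is R_s = L_w/L_x = C*(N,K) = N^K(N−1)/(N^K − 1); moreover, in this code each of the K decoding supersets consists of exactly N^{K−1} decoding sets and every coded symbol appears in exactly one decoding set for each source symbol. -/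
open scoped BigOperators

noncomputable section

section AuxSLDC
set_option linter.unusedSectionVars false


/-- The uniform probability space over a nonempty finite type. -/
def uniformSpace (Ωt : Type) [Fintype Ωt] [Nonempty Ωt] : FinProbSpace where
  Ω := Ωt
  p := fun _ => (Fintype.card Ωt : ℝ)⁻¹
  nonneg := fun _ => by positivity
  sum_one := by
    rw [Finset.sum_const, Finset.card_univ, nsmul_eq_mul]
    exact mul_inv_cancel₀ (by exact_mod_cast Fintype.card_ne_zero)

lemma uniform_prob (Ωt : Type) [Fintype Ωt] [Nonempty Ωt] [AddCommGroup Ωt]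
    {α : Type} [Fintype α] [DecidableEq α] [AddCommGroup α]
    (f : Ωt →+ α) (hs : Function.Surjective f) (a : α) :
    (uniformSpace Ωt).prob f a = (Fintype.card α : ℝ)⁻¹ := by
  have hfib : ∀ a b : α, (Finset.univ.filter (fun ω : Ωt => f ω = a)).card
      = (Finset.univ.filter (fun ω : Ωt => f ω = b)).card := by
    intro a b
    obtain ⟨xa, hxa⟩ := hs a
    obtain ⟨xb, hxb⟩ := hs b
    apply Finset.card_bij' (fun ω _ => ω + (xb - xa)) (fun ω _ => ω + (xa - xb))
    · intro ω hω
      simp only [Finset.mem_filter, Finset.mem_univ, true_and] at hω ⊢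
      rw [map_add, map_sub, hω, hxa, hxb]
      abel
    · intro ω hω
      simp only [Finset.mem_filter, Finset.mem_univ, true_and] at hω ⊢
      rw [map_add, map_sub, hω, hxa, hxb]
      abel
    · intro ω _
      show ω + (xb - xa) + (xa - xb) = ω
      abel
    · intro ω _
      show ω + (xa - xb) + (xb - xa) = ω
      abel
  have htot : (Fintype.card α) * (Finset.univ.filter (fun ω : Ωt => f ω = a)).card
      = Fintype.card Ωt := by
    have h1 : (Finset.univ : Finset Ωt).card
        = ∑ b : α, (Finset.univ.filter (fun ω : Ωt => f ω = b)).card :=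
      Finset.card_eq_sum_card_fiberwise (fun x _ => Finset.mem_univ _)
    have h2 : Fintype.card Ωt = (Finset.univ : Finset Ωt).card := rfl
    rw [h2, h1, Finset.sum_congr rfl (fun b _ => hfib b a), Finset.sum_const,
      Finset.card_univ, smul_eq_mul]
  have hΩ : (0:ℝ) < Fintype.card Ωt := by exact_mod_cast Fintype.card_pos
  have hα : (0:ℝ) < Fintype.card α := by
    have : Nonempty α := ⟨f (Classical.arbitrary Ωt)⟩
    exact_mod_cast Fintype.card_pos
  have hcount : (uniformSpace Ωt).prob f a
      = ((Finset.univ.filter (fun ω : Ωt => f ω = a)).card : ℝ) * (Fintype.card Ωt : ℝ)⁻¹ := by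
    unfold FinProbSpace.prob uniformSpace
    rw [← Finset.sum_filter, Finset.sum_const, nsmul_eq_mul]
  rw [hcount]
  have : ((Fintype.card α : ℝ)) * ((Finset.univ.filter (fun ω : Ωt => f ω = a)).card : ℝ)
      = (Fintype.card Ωt : ℝ) := by exact_mod_cast htot
  field_simp
  nlinarith [this]

lemma uniform_H {P : FinProbSpace} {α : Type} [Fintype α] [DecidableEq α] [Nonempty α]
    (X : P.Ω → α) (h : ∀ a, P.prob X a = (Fintype.card α : ℝ)⁻¹) :
    P.H X = Real.logb 2 (Fintype.card α) := by
  have hα : (0:ℝ) < Fintype.card α := by exact_mod_cast Fintype.card_pos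
  unfold FinProbSpace.H
  rw [Finset.sum_congr rfl (fun a _ => by rw [h a]), Finset.sum_const, Finset.card_univ,
    nsmul_eq_mul, Real.logb_inv]
  field_simp

lemma condH_zero_of_fn {P : FinProbSpace} {α β : Type} [Fintype α] [DecidableEq α]
    [Fintype β] [DecidableEq β] (W : P.Ω → α) (Y : P.Ω → β) (g : β → α)
    (hg : ∀ ω, W ω = g (Y ω)) : P.condH W Y = 0 := by
  have key : ∀ a b, P.prob (fun ω => (W ω, Y ω)) (a, b)
      = if g b = a then P.prob Y b else 0 := by
    intro a b
    unfold FinProbSpace.prob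
    have hcond : ∀ ω, ((W ω, Y ω) = (a, b)) ↔ (Y ω = b ∧ g b = a) := by
      intro ω
      rw [Prod.mk.injEq, hg ω]
      constructor
      · rintro ⟨h1, h2⟩; exact ⟨h2, by rw [← h2]; exact h1⟩
      · rintro ⟨h2, h1⟩; exact ⟨by rw [h2]; exact h1, h2⟩
    by_cases hab : g b = a
    · rw [if_pos hab]
      apply Finset.sum_congr rfl
      intro ω _
      exact if_congr (by rw [hcond ω]; simp [hab]) rfl rfl
    · rw [if_neg hab, Finset.sum_eq_zero]
      intro ω _
      rw [if_neg]
      intro h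
      exact hab ((hcond ω).mp h).2
  unfold FinProbSpace.condH
  rw [sub_eq_zero]
  unfold FinProbSpace.H
  rw [Fintype.sum_prod_type_right]
  apply Finset.sum_congr rfl
  intro b _
  rw [Finset.sum_congr rfl (fun a _ => by rw [key a b])]
  rw [show ∀ c : ℝ, (∑ a : α, -((if g b = a then c else 0) *
      Real.logb 2 (if g b = a then c else 0)))
      = ∑ a : α, (if g b = a then -(c * Real.logb 2 c) else 0) from fun c => by
    apply Finset.sum_congr rfl; intro a _; split <;> simp]
  rw [Finset.sum_ite_eq]
  simp



namespace Ach

variable (N K : ℕ) [NeZero N]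

abbrev Vec := Fin K → Fin N
abbrev Cnz := {c : Fin N // c ≠ 0}
abbrev Vnz := {u : Vec N K // u ≠ 0}
abbrev Vb := (Vec N K × Cnz N) → ZMod 2
abbrev Vx := Vnz N K → ZMod 2
abbrev Om := Fin K → Vb N K

/-- the coded symbol at position `v`, as a function of the messages -/
def Xv (v : Vec N K) (ω : Om N K) : Vx N K := fun u =>
  ∑ k' : Fin K, if h : u.1 k' ≠ 0
    then ω k' (Function.update (v + u.1) k' (v k'), ⟨u.1 k', h⟩) else 0

def eqv : Vec N K ≃ Fin (N ^ K) := finFunctionFinEquiv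

def line (k : Fin K) (v : Vec N K) : Finset (Fin (N ^ K)) :=
  Finset.image (fun t => eqv N K (Function.update v k t)) Finset.univ

variable {N K}

lemma line_card (k : Fin K) (v : Vec N K) : (line N K k v).card = N := by
  rw [line, Finset.card_image_of_injective _ (fun t t' h => by
    have := congrFun ((eqv N K).injective h) k
    simpa using this)]
  simp

lemma line_update (k : Fin K) (v : Vec N K) (t : Fin N) :
    line N K k (Function.update v k t) = line N K k v := by
  unfold line
  apply Finset.image_congr
  intro t' _
  simp only []
  rw [Function.update_idem]

lemma mem_line_self (k : Fin K) (v : Vec N K) : eqv N K v ∈ line N K k v := by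
  rw [line, Finset.mem_image]
  exact ⟨v k, Finset.mem_univ _, by rw [Function.update_eq_self]⟩

lemma line_eq_of_mem {k : Fin K} {v : Vec N K} {m : Fin (N ^ K)} (hm : m ∈ line N K k v) :
    line N K k v = line N K k ((eqv N K).symm m) := by
  rw [line, Finset.mem_image] at hm
  obtain ⟨t, -, ht⟩ := hm
  rw [← ht, Equiv.symm_apply_apply, line_update]

lemma line_eq_iff_off (k : Fin K) (v w : Vec N K) :
    line N K k v = line N K k w ↔ ∀ j ≠ k, v j = w j := by
  constructor
  · intro h j hj
    have hv : eqv N K v ∈ line N K k w := h ▸ mem_line_self k v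
    rw [line, Finset.mem_image] at hv
    obtain ⟨t, -, ht⟩ := hv
    have := congrFun ((eqv N K).injective ht) j
    rw [Function.update_of_ne hj] at this
    exact this.symm
  · intro h
    have : v = Function.update w k (v k) := by
      funext j
      by_cases hj : j = k
      · subst hj; rw [Function.update_self]
      · rw [Function.update_of_ne hj]; exact h j hj
    rw [this, line_update]

end Ach

namespace Ach
variable {N K : ℕ} [NeZero N]

def decSets (k : Fin K) : Finset (Finset (Fin (N ^ K))) :=
  Finset.image (line N K k) Finset.univ

lemma mem_line_symm (k : Fin K) (m : Fin (N ^ K)) :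
    m ∈ line N K k ((eqv N K).symm m) := by
  have := mem_line_self k ((eqv N K).symm m)
  rwa [Equiv.apply_symm_apply] at this

lemma filter_decSets (k : Fin K) (m : Fin (N ^ K)) :
    (decSets k).filter (fun s => m ∈ s) = {line N K k ((eqv N K).symm m)} := by
  apply Finset.eq_singleton_iff_unique_mem.mpr
  constructor
  · rw [Finset.mem_filter]
    exact ⟨Finset.mem_image.mpr ⟨_, Finset.mem_univ _, rfl⟩, mem_line_symm k m⟩
  · intro s hs
    rw [Finset.mem_filter, decSets, Finset.mem_image] at hs
    obtain ⟨⟨v, -, rfl⟩, hm⟩ := hs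
    exact line_eq_of_mem hm

lemma filter_decSets_card (k : Fin K) (m : Fin (N ^ K)) :
    ((decSets k).filter (fun s => m ∈ s)).card = 1 := by
  rw [filter_decSets]; simp

lemma decSets_card (k : Fin K) : (decSets (N := N) k).card = N ^ (K - 1) := by
  have hinj : Function.Injective
      (fun f : {j : Fin K // j ≠ k} → Fin N =>
        line N K k (fun j => if h : j = k then 0 else f ⟨j, h⟩)) := by
    intro f f' h
    simp only [] at h
    rw [line_eq_iff_off] at h
    funext ⟨j, hj⟩
    have := h j hj
    rw [dif_neg hj, dif_neg hj] at this
    exact this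
  have himg : decSets (N := N) k = Finset.image
      (fun f : {j : Fin K // j ≠ k} → Fin N =>
        line N K k (fun j => if h : j = k then 0 else f ⟨j, h⟩)) Finset.univ := by
    apply Finset.Subset.antisymm
    · intro s hs
      rw [decSets, Finset.mem_image] at hs
      rw [Finset.mem_image]
      obtain ⟨v, -, rfl⟩ := hs
      refine ⟨fun j => v j.1, Finset.mem_univ _, ?_⟩
      rw [line_eq_iff_off]
      intro j hj
      rw [dif_neg hj]
    · intro s hs
      rw [Finset.mem_image] at hs
      rw [decSets, Finset.mem_image]
      obtain ⟨f, -, rfl⟩ := hs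
      exact ⟨_, Finset.mem_univ _, rfl⟩
  rw [himg, Finset.card_image_of_injective _ hinj, Finset.card_univ, Fintype.card_fun]
  congr 1
  · simp
  · rw [Fintype.card_subtype_compl]
    simp

lemma card_Vec : Fintype.card (Vec N K) = N ^ K := by
  rw [Fintype.card_fun]; simp

lemma card_Cnz : Fintype.card (Cnz N) = N - 1 := by
  rw [Fintype.card_subtype_compl]
  simp [Fintype.card_subtype_eq]

lemma card_Vnz : Fintype.card (Vnz N K) = N ^ K - 1 := by
  rw [Fintype.card_subtype_compl]
  simp [Fintype.card_subtype_eq, card_Vec]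

lemma card_Vb : Fintype.card (Vb N K) = 2 ^ (N ^ K * (N - 1)) := by
  rw [Fintype.card_fun, Fintype.card_prod, card_Vec, card_Cnz]
  simp

lemma card_Vx : Fintype.card (Vx N K) = 2 ^ (N ^ K - 1) := by
  rw [Fintype.card_fun, card_Vnz]
  simp

lemma card_Om : Fintype.card (Om N K) = Fintype.card (Vb N K) ^ K := by
  rw [Fintype.card_fun, Fintype.card_fin]

end Ach

namespace Ach
variable {N K : ℕ} [NeZero N]

lemma Xv_add (v : Vec N K) (ω ω' : Om N K) :
    Xv N K v (ω + ω') = Xv N K v ω + Xv N K v ω' := by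
  funext u
  show _ = Xv N K v ω u + Xv N K v ω' u
  rw [Xv, Xv, Xv, ← Finset.sum_add_distrib]
  apply Finset.sum_congr rfl
  intro k' _
  by_cases h : u.1 k' ≠ 0
  · rw [dif_pos h, dif_pos h, dif_pos h]; rfl
  · rw [dif_neg h, dif_neg h, dif_neg h]; simp

def XvHom (v : Vec N K) : Om N K →+ Vx N K := AddMonoidHom.mk' (Xv N K v) (Xv_add v)

def pick (u : Vnz N K) : Fin K := (Function.ne_iff.mp u.2).choose

lemma pick_spec (u : Vnz N K) : u.1 (pick u) ≠ 0 := by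
  have := (Function.ne_iff.mp u.2).choose_spec
  exact this

def recv (v : Vec N K) (k' : Fin K) (z : Vec N K) (c : Cnz N) : Vnz N K :=
  ⟨Function.update (z - v) k' c.1, by
    intro h
    have := congrFun h k'
    rw [Function.update_self] at this
    exact c.2 this⟩

lemma recv_coord (v : Vec N K) (u : Vnz N K) (k' : Fin K) (h : u.1 k' ≠ 0) :
    recv v k' (Function.update (v + u.1) k' (v k')) ⟨u.1 k', h⟩ = u := by
  apply Subtype.ext
  funext j
  show Function.update (Function.update (v + u.1) k' (v k') - v) k' (u.1 k') j = u.1 j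
  by_cases hj : j = k'
  · subst hj; rw [Function.update_self]
  · rw [Function.update_of_ne hj]
    show Function.update (v + u.1) k' (v k') j - v j = u.1 j
    rw [Function.update_of_ne hj]
    show v j + u.1 j - v j = u.1 j
    abel

lemma Xv_surjective (v : Vec N K) : Function.Surjective (Xv N K v) := by
  intro y
  refine ⟨fun k' zc => if zc.1 k' = v k' ∧ pick (recv v k' zc.1 zc.2) = k'
    then y (recv v k' zc.1 zc.2) else 0, ?_⟩
  funext u
  rw [Xv]
  rw [Fintype.sum_eq_single (pick u)]
  · rw [dif_pos (pick_spec u)]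
    have hz : Function.update (v + u.1) (pick u) (v (pick u)) (pick u) = v (pick u) :=
      Function.update_self _ _ _
    rw [if_pos]
    · rw [recv_coord]
    · exact ⟨hz, by rw [recv_coord]⟩
  · intro k' hk'
    by_cases h : u.1 k' ≠ 0
    · rw [dif_pos h, if_neg]
      rintro ⟨-, hpick⟩
      rw [recv_coord] at hpick
      exact hk' hpick.symm
    · rw [dif_neg h]

def projW (k : Fin K) : Om N K →+ Vb N K := Pi.evalAddMonoidHom _ k

lemma projW_surjective (k : Fin K) : Function.Surjective (projW (N := N) (K := K) k) :=
  fun a => ⟨fun _ => a, rfl⟩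

/-- second decoding-set index component -/
def u2of (v : Vec N K) (k : Fin K) (z : Vec N K) {j0 : Fin K} (hj0 : j0 ≠ k)
    (hz : z j0 ≠ v j0) : Vnz N K :=
  ⟨Function.update (z - v) k 0, by
    intro h
    have := congrFun h j0
    rw [Function.update_of_ne hj0] at this
    exact hz (by
      have : z j0 - v j0 = 0 := this
      rwa [sub_eq_zero] at this)⟩

end Ach

namespace Ach
variable {N K : ℕ} [NeZero N]

lemma key_coord (v : Vec N K) (k : Fin K) (z : Vec N K) (c : Cnz N) :
    Function.update (Function.update v k (z k) + (recv v k z c).1) k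
      (Function.update v k (z k) k) = z := by
  funext j
  by_cases hj : j = k
  · subst hj
    rw [Function.update_self, Function.update_self]
  · rw [Function.update_of_ne hj]
    show Function.update v k (z k) j + (recv v k z c).1 j = z j
    rw [Function.update_of_ne hj]
    show v j + Function.update (z - v) k c.1 j = z j
    rw [Function.update_of_ne hj]
    show v j + (z j - v j) = z j
    abel

lemma decode_on (k : Fin K) (v z : Vec N K) (c : Cnz N) (ω : Om N K)
    (hz : ∀ j ≠ k, z j = v j) :
    Xv N K (Function.update v k (z k)) ω (recv v k z c) = ω k (z, c) := by
  rw [Xv]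
  have hk : (recv v k z c).1 k ≠ 0 := by
    show Function.update (z - v) k c.1 k ≠ 0
    rw [Function.update_self]; exact c.2
  rw [Fintype.sum_eq_single k]
  · rw [dif_pos hk]
    congr 1
    rw [key_coord]
    exact Prod.ext rfl (Subtype.ext (Function.update_self _ _ _))
  · intro j hj
    rw [dif_neg]
    show ¬ Function.update (z - v) k c.1 j ≠ 0
    rw [Function.update_of_ne hj, not_not]
    show z j - v j = 0
    rw [sub_eq_zero]
    exact hz j hj

lemma decode_off (k : Fin K) (v z : Vec N K) (c : Cnz N) (ω : Om N K)
    {j0 : Fin K} (hj0 : j0 ≠ k) (hz : z j0 ≠ v j0) :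
    Xv N K (Function.update v k (z k)) ω (recv v k z c)
      + Xv N K (Function.update v k (z k + c.1)) ω (u2of v k z hj0 hz) = ω k (z, c) := by
  rw [Xv, Xv, ← Finset.sum_add_distrib]
  have hk : (recv v k z c).1 k ≠ 0 := by
    show Function.update (z - v) k c.1 k ≠ 0
    rw [Function.update_self]; exact c.2
  have hk2 : ¬ (u2of v k z hj0 hz).1 k ≠ 0 := by
    show ¬ Function.update (z - v) k 0 k ≠ 0
    rw [Function.update_self, not_not]
  rw [Fintype.sum_eq_single k]
  · rw [dif_pos hk, dif_neg hk2, add_zero]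
    congr 1
    rw [key_coord]
    exact Prod.ext rfl (Subtype.ext (Function.update_self _ _ _))
  · intro j hj
    have e1 : (recv v k z c).1 j = z j - v j := Function.update_of_ne hj _ _
    have e2 : (u2of v k z hj0 hz).1 j = z j - v j := Function.update_of_ne hj _ _
    by_cases hjz : z j - v j ≠ 0
    · rw [dif_pos (e1 ▸ hjz), dif_pos (e2 ▸ hjz)]
      have hq : Function.update v k (z k) + (recv v k z c).1
          = Function.update v k (z k + c.1) + (u2of v k z hj0 hz).1 := by
        funext i
        show Function.update v k (z k) i + Function.update (z - v) k c.1 i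
          = Function.update v k (z k + c.1) i + Function.update (z - v) k 0 i
        by_cases hi : i = k
        · subst hi
          rw [Function.update_self, Function.update_self, Function.update_self,
            Function.update_self, add_zero]
        · rw [Function.update_of_ne hi, Function.update_of_ne hi, Function.update_of_ne hi,
            Function.update_of_ne hi]
      have hp : Function.update v k (z k) j = Function.update v k (z k + c.1) j := by
        rw [Function.update_of_ne hj, Function.update_of_ne hj]
      have : ω j (Function.update (Function.update v k (z k) + (recv v k z c).1) j
            (Function.update v k (z k) j), ⟨(recv v k z c).1 j, e1 ▸ hjz⟩)
          = ω j (Function.update (Function.update v k (z k + c.1) + (u2of v k z hj0 hz).1) j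
            (Function.update v k (z k + c.1) j), ⟨(u2of v k z hj0 hz).1 j, e2 ▸ hjz⟩) := by
        congr 1
        rw [hq, hp]
        refine Prod.ext rfl (Subtype.ext ?_)
        show (recv v k z c).1 j = (u2of v k z hj0 hz).1 j
        rw [e1, e2]
      rw [this]
      exact CharTwo.add_self_eq_zero _
    · rw [dif_neg (by rw [e1]; exact hjz), dif_neg (by rw [e2]; exact hjz), add_zero]

end Ach


namespace Ach
variable {N K : ℕ} [NeZero N]

lemma mem_line_update (k : Fin K) (v : Vec N K) (t : Fin N) :
    eqv N K (Function.update v k t) ∈ line N K k v :=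
  Finset.mem_image.mpr ⟨t, Finset.mem_univ _, rfl⟩

end Ach

lemma uniform_prob_id (Ωt : Type) [Fintype Ωt] [Nonempty Ωt] [DecidableEq Ωt] (a : Ωt) :
    (uniformSpace Ωt).prob (α := Ωt) (fun ω => ω) a = (Fintype.card Ωt : ℝ)⁻¹ := by
  unfold FinProbSpace.prob uniformSpace
  rw [Finset.sum_ite_eq' Finset.univ a]
  simp

lemma logb_two_pow (t : ℕ) : Real.logb 2 ((2 ^ t : ℕ) : ℝ) = t := by
  push_cast
  rw [Real.logb_pow]
  simp

end AuxSLDC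

/-- Achievability of capacity at length `N^K`: for `N ≥ 2`, `K ≥ 1` there
is a perfectly smooth LDC with locality `N`, `K` source symbols, `M = N^K` coded symbols,
source symbols uniformly distributed over `Lw = N^K (N-1)` independent bits each, coded
symbols of entropy `Lx = N^K - 1` bits, symbol rate `Lw / Lx = C*(N, K)`, with `N^{K-1}`
decoding sets per source symbol and every coded symbol in exactly one decoding set per
source symbol. -/
theorem sldc_achievability (K N : ℕ) (hK : 1 ≤ K) (hN : 2 ≤ N) :
    ∃ C : LDC K N (N ^ K) ((N ^ K * (N - 1) : ℕ) : ℝ) ((N ^ K - 1 : ℕ) : ℝ),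
      C.IsSmooth ∧
      (∀ (k : Fin K) (a : C.V), C.P.prob (C.W k) a = ((2 : ℝ) ^ (N ^ K * (N - 1)))⁻¹) ∧
      ((N ^ K * (N - 1) : ℕ) : ℝ) / ((N ^ K - 1 : ℕ) : ℝ) = Cstar N K ∧
      (∀ k : Fin K, (C.decSets k).card = N ^ (K - 1)) ∧
      (∀ (k : Fin K) (m : Fin (N ^ K)),
        ((C.decSets k).filter (fun s => m ∈ s)).card = 1) := by
  haveI : NeZero N := ⟨by omega⟩
  have hN0 : (0 : ℝ) < N := by positivity
  refine ⟨{
    P := uniformSpace (Ach.Om N K)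
    V := Ach.Vb N K
    V' := Ach.Vx N K
    W := fun k ω => ω k
    X := fun m ω => Ach.Xv N K ((Ach.eqv N K).symm m) ω
    indep := ?_
    HW := ?_
    coded_fn := ?_
    HX := ?_
    decSets := Ach.decSets
    decSets_nonempty := ?_
    decSets_card := ?_
    decodes := ?_ }, ?_, ?_, ?_, ?_, ?_⟩
  · -- indep
    intro a
    have h1 : (uniformSpace (Ach.Om N K)).prob (α := Ach.Om N K) (fun ω => ω) a
        = (Fintype.card (Ach.Om N K) : ℝ)⁻¹ := uniform_prob_id _ a
    have h2 : ∀ k : Fin K, (uniformSpace (Ach.Om N K)).prob (fun ω => ω k) (a k)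
        = (Fintype.card (Ach.Vb N K) : ℝ)⁻¹ := fun k =>
      uniform_prob _ (Ach.projW k) (Ach.projW_surjective k) (a k)
    show (uniformSpace (Ach.Om N K)).prob (α := Ach.Om N K) (fun ω => ω) a = _
    rw [h1, Finset.prod_congr rfl (fun k _ => h2 k), Finset.prod_const, Finset.card_univ,
      Fintype.card_fin, Ach.card_Om, inv_pow]
    push_cast
    ring
  · -- HW
    intro k
    have := uniform_H (P := uniformSpace (Ach.Om N K)) (fun ω => ω k)
      (fun a => uniform_prob _ (Ach.projW k) (Ach.projW_surjective k) a)
    rw [this, Ach.card_Vb, logb_two_pow]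
  · -- coded_fn
    intro m
    exact ⟨fun w => Ach.Xv N K ((Ach.eqv N K).symm m) w, fun ω => rfl⟩
  · -- HX
    intro m
    have := uniform_H (P := uniformSpace (Ach.Om N K))
      (fun ω => Ach.Xv N K ((Ach.eqv N K).symm m) ω)
      (fun a => uniform_prob _ (Ach.XvHom ((Ach.eqv N K).symm m))
        (Ach.Xv_surjective _) a)
    rw [this, Ach.card_Vx, logb_two_pow]
  · -- decSets_nonempty
    intro k
    exact ⟨Ach.line N K k (fun _ => 0), Finset.mem_image.mpr ⟨_, Finset.mem_univ _, rfl⟩⟩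
  · -- decSets_card
    intro k s hs
    rw [Ach.decSets] at hs
    obtain ⟨v, -, rfl⟩ := Finset.mem_image.mp hs
    exact Ach.line_card k v
  · -- decodes
    intro k s hs
    rw [Ach.decSets] at hs
    obtain ⟨v, -, rfl⟩ := Finset.mem_image.mp hs
    refine condH_zero_of_fn _ _
      (fun f zc =>
        if hoff : ∃ j, ¬(j = k) ∧ zc.1 j ≠ v j then
          f ⟨Ach.eqv N K (Function.update v k (zc.1 k)), Ach.mem_line_update k v _⟩
              (Ach.recv v k zc.1 zc.2)
            + f ⟨Ach.eqv N K (Function.update v k (zc.1 k + zc.2.1)),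
                Ach.mem_line_update k v _⟩
              (Ach.u2of v k zc.1 hoff.choose_spec.1 hoff.choose_spec.2)
        else
          f ⟨Ach.eqv N K (Function.update v k (zc.1 k)), Ach.mem_line_update k v _⟩
              (Ach.recv v k zc.1 zc.2)) ?_
    intro ω
    funext zc
    obtain ⟨z, c⟩ := zc
    by_cases hoff : ∃ j, ¬(j = k) ∧ z j ≠ v j
    · simp only []
      rw [dif_pos hoff]
      show ω k (z, c)
          = Ach.Xv N K ((Ach.eqv N K).symm (Ach.eqv N K (Function.update v k (z k)))) ω
              (Ach.recv v k z c)
            + Ach.Xv N K ((Ach.eqv N K).symm (Ach.eqv N K (Function.update v k (z k + c.1)))) ω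
              (Ach.u2of v k z hoff.choose_spec.1 hoff.choose_spec.2)
      simp only [Equiv.symm_apply_apply]
      exact (Ach.decode_off k v z c ω hoff.choose_spec.1 hoff.choose_spec.2).symm
    · simp only []
      rw [dif_neg hoff]
      show ω k (z, c)
          = Ach.Xv N K ((Ach.eqv N K).symm (Ach.eqv N K (Function.update v k (z k)))) ω
              (Ach.recv v k z c)
      simp only [Equiv.symm_apply_apply]
      push_neg at hoff
      exact (Ach.decode_on k v z c ω (fun j hj => hoff j hj)).symm
  · -- IsSmooth
    intro k m m'
    rw [Ach.filter_decSets_card, Ach.filter_decSets_card]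
  · -- prob values
    intro k a
    have h : (uniformSpace (Ach.Om N K)).prob (fun ω => ω k) a
        = ((Fintype.card (Ach.Vb N K) : ℝ))⁻¹ :=
      uniform_prob _ (Ach.projW (N := N) (K := K) k) (Ach.projW_surjective k) a
    show (uniformSpace (Ach.Om N K)).prob (fun ω => ω k) a = _
    rw [h, Ach.card_Vb]
    push_cast
    ring
  · -- rate identity
    have hK1 : 1 ≤ N ^ K := Nat.one_le_pow _ _ (by omega)
    have hNR : (1 : ℝ) < (N : ℝ) := by exact_mod_cast hN
    have hNKR : (1 : ℝ) < (N : ℝ) ^ K := by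
      apply one_lt_pow₀ hNR (by omega)
    have hx : ((N : ℝ))⁻¹ ≠ 1 := by
      intro h
      rw [inv_eq_one] at h
      exact hNR.ne' h
    rw [Cstar, one_div, geom_sum_eq hx]
    have h1 : ((N : ℝ))⁻¹ - 1 ≠ 0 := by
      intro h
      rw [sub_eq_zero] at h
      exact hx h
    have h2 : ((N : ℝ))⁻¹ ^ K - 1 ≠ 0 := by
      intro h
      rw [sub_eq_zero, inv_pow, inv_eq_one] at h
      exact hNKR.ne' h
    have h3 : (N : ℝ) ^ K - 1 ≠ 0 := by
      intro h
      rw [sub_eq_zero] at h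
      exact hNKR.ne' h
    have hcast : ((N ^ K * (N - 1) : ℕ) : ℝ) = (N : ℝ) ^ K * ((N : ℝ) - 1) := by
      push_cast [Nat.cast_sub (by omega : 1 ≤ N)]
      ring
    have hcast2 : ((N ^ K - 1 : ℕ) : ℝ) = (N : ℝ) ^ K - 1 := by
      push_cast [Nat.cast_sub hK1]
      ring
    rw [hcast, hcast2]
    have hN0' : (N : ℝ) ≠ 0 := ne_of_gt hN0
    rw [div_div_eq_mul_div, div_eq_div_iff h3 h2]
    field_simp
    have hx1 : (N : ℝ) ^ K * ((N : ℝ)⁻¹) ^ K = 1 := by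
      rw [← mul_pow, mul_inv_cancel₀ hN0', one_pow]
    linear_combination ((N : ℝ) - 1) * hx1
  · -- decSets card
    intro k
    exact Ach.decSets_card k
  · -- filter card
    intro k m
    exact Ach.filter_decSets_card k m
end
end
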